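/- arXiv:2204.06926 — 7 statements merged into one kernel-verified Lean document; each statement's English description precedes it below -/
import Mathlib

section
/- If p is a prime with p ≥ 5 and λ, μ are algebraic integers satisfying λ + μ = -1 and λ² + μ² = (3p+1)/2, then λμ = -(3p-1)/4 and p ≡ 3 (mod 4). -/
theorem stmt_7 (p : ℕ) (hp : p.Prime) (hp5 : 5 ≤ p) (lam mu : ℂ)
    (hlam : IsIntegral ℤ lam) (hmu : IsIntegral ℤ mu)
    (hsum : lam + mu = -1)
    (hsq : lam ^ 2 + mu ^ 2 = (3 * (p : ℂ) + 1) / 2) :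
    lam * mu = -((3 * (p : ℂ) - 1) / 4) ∧ p % 4 = 3 := by
  have hprod : lam * mu = -((3 * (p : ℂ) - 1) / 4) := by
    have h1 : (lam + mu) ^ 2 = 1 := by rw [hsum]; ring
    linear_combination h1 / 2 - hsq / 2
  refine ⟨hprod, ?_⟩
  have hint : IsIntegral ℤ (lam * mu) := hlam.mul hmu
  set q : ℚ := (1 - 3 * (p : ℚ)) / 4 with hq
  have hmap : (algebraMap ℚ ℂ) q = lam * mu := by
    rw [hprod, hq]
    push_cast
    norm_num
    ring
  have hqint : IsIntegral ℤ q := by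
    rw [← isIntegral_algHom_iff (IsScalarTower.toAlgHom ℤ ℚ ℂ)
      (algebraMap ℚ ℂ).injective]
    show IsIntegral ℤ ((IsScalarTower.toAlgHom ℤ ℚ ℂ) q)
    rw [show ((IsScalarTower.toAlgHom ℤ ℚ ℂ) q) = (algebraMap ℚ ℂ) q from rfl, hmap]
    exact hint
  obtain ⟨n, hn⟩ := IsIntegrallyClosed.isIntegral_iff.mp hqint
  have : (n : ℚ) * 4 = 1 - 3 * (p : ℚ) := by
    have : ((n : ℚ)) = q := by exact_mod_cast hn
    rw [this, hq]; field_simp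
  have hz : n * 4 = 1 - 3 * (p : ℤ) := by exact_mod_cast this
  omega
end

section
/- If p is a prime with p = 3a² + 3a + 1 for an integer a ≥ 0, λ and μ are the roots of x² + (a+1)x + (1/2)(5a+2)(a+1) = 0, and a₂₂₃ is defined by 3p(p+a)·a₂₂₃ = (p+a)³ + p·λμ·(λ+μ) + (p-1)a³, then a₂₂₃ = a² + 3a/2; hence if a₂₂₃ is an integer then a is even. -/
theorem stmt_8 (a p : ℤ) (ha : 0 ≤ a) (hp : p = 3 * a ^ 2 + 3 * a + 1)
    (hpp : Prime p) (lam mu a223 : ℂ)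
    (hsum : lam + mu = -((a : ℂ) + 1))
    (hprod : lam * mu = (1 / 2) * (5 * (a : ℂ) + 2) * ((a : ℂ) + 1))
    (heq : 3 * (p : ℂ) * ((p : ℂ) + a) * a223 =
      ((p : ℂ) + a) ^ 3 + (p : ℂ) * (lam * mu) * (lam + mu) + ((p : ℂ) - 1) * (a : ℂ) ^ 3) :
    a223 = (a : ℂ) ^ 2 + 3 * (a : ℂ) / 2 ∧
      ((∃ k : ℤ, a223 = (k : ℂ)) → Even a) := by
  have hpa : p + a = (3 * a + 1) * (a + 1) := by rw [hp]; ring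
  have hpa0 : (0:ℤ) < p + a := by
    rw [hpa]; positivity
  have hP : ((p:ℂ)) = 3 * (a:ℂ) ^ 2 + 3 * (a:ℂ) + 1 := by
    exact_mod_cast congrArg (Int.cast : ℤ → ℂ) hp
  have hp0 : (p:ℂ) ≠ 0 := by
    exact_mod_cast (Int.cast_ne_zero (α := ℂ)).2 hpp.ne_zero
  have hpa0' : (p:ℂ) + (a:ℂ) ≠ 0 := by
    have : ((p + a : ℤ) : ℂ) ≠ 0 := by exact_mod_cast hpa0.ne'
    push_cast at this; exact this
  have key : a223 = (a : ℂ) ^ 2 + 3 * (a : ℂ) / 2 := by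
    have h3 : (3 : ℂ) * (p:ℂ) * ((p:ℂ) + (a:ℂ)) ≠ 0 := by
      apply mul_ne_zero (mul_ne_zero (by norm_num) hp0) hpa0'
    rw [hsum, hprod] at heq
    have h2 : 3 * (p : ℂ) * ((p : ℂ) + a) *
        (a223 * 2 - ((a:ℂ) ^ 2 * 2 + 3 * (a:ℂ))) = 0 := by
      rw [hP] at heq ⊢; ring_nf; ring_nf at heq; linear_combination 2 * heq
    rcases mul_eq_zero.1 h2 with h | h
    · exact absurd h h3
    · linear_combination h / 2
  refine ⟨key, ?_⟩
  rintro ⟨k, hk⟩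
  have : ((2 * k : ℤ) : ℂ) = ((2 * a ^ 2 + 3 * a : ℤ) : ℂ) := by
    push_cast
    rw [← hk, key]; ring
  have h2 : 2 * k = 2 * a ^ 2 + 3 * a := by exact_mod_cast this
  have : Even (3 * a) := ⟨k - a ^ 2, by linarith⟩
  rcases (Int.even_mul.1 this) with h | h
  · rcases h with ⟨r, hr⟩; omega
  · exact h
end

section
/- Let p be a prime and let ν₁, ν₂ be integers such that 3ν₂ + 2p + 1 divides (2p+1)(ν₂² + ν₂) - 2p(p-1). Then 3ν₂ + 2p + 1 divides 3(ν₂+1)²(2ν₂+1). -/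
theorem stmt_10 (p : ℕ) (hp : p.Prime) (ν₁ ν₂ : ℤ)
    (h : (3 * ν₂ + 2 * (p : ℤ) + 1) ∣
      ((2 * (p : ℤ) + 1) * (ν₂ ^ 2 + ν₂) - 2 * (p : ℤ) * ((p : ℤ) - 1))) :
    (3 * ν₂ + 2 * (p : ℤ) + 1) ∣ 3 * (ν₂ + 1) ^ 2 * (2 * ν₂ + 1) := by
  obtain ⟨k, hk⟩ := h
  exact ⟨2 * ν₂ ^ 2 + 5 * ν₂ + 3 - 2 * (p : ℤ) - 2 * k, by linear_combination -2 * hk⟩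
end

section
/- Let p be a prime and b a nonnegative integer with 3b² ≤ 4p - 1, such that 2(p+b) divides (b+1)(2b+1)(3b+1) and (2p+3b+1) divides 3(b+1)²(2b+1). Then 4p - 1 = 3b². -/
theorem stmt_12 (p b : ℕ) (hp : p.Prime)
    (hb : 3 * b ^ 2 ≤ 4 * p - 1)
    (h1 : 2 * (p + b) ∣ (b + 1) * (2 * b + 1) * (3 * b + 1))
    (h2 : 2 * p + 3 * b + 1 ∣ 3 * (b + 1) ^ 2 * (2 * b + 1)) :
    4 * p - 1 = 3 * b ^ 2 := by
  obtain ⟨u, hu⟩ := h1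
  obtain ⟨v, hv⟩ := h2
  have hp2 : 2 ≤ p := hp.two_le
  have hb' : 3 * (b : ℤ) ^ 2 + 1 ≤ 4 * (p : ℤ) := by
    have h : 3 * b ^ 2 + 1 ≤ 4 * p := by
      set B := b ^ 2; omega
    exact_mod_cast h
  have h1' : ((b : ℤ) + 1) * (2 * b + 1) * (3 * b + 1) = 2 * (p + b) * u := by
    exact_mod_cast hu
  have h2' : 3 * ((b : ℤ) + 1) ^ 2 * (2 * b + 1) = (2 * p + 3 * b + 1) * v := by
    exact_mod_cast hv
  have key : ((v : ℤ) - u) * ((2 * p + 2 * b) * (2 * p + 3 * b + 1)) =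
      ((b : ℤ) + 1) * (2 * b + 1) * (4 * p - 1 - 3 * b ^ 2) := by
    linear_combination (2 * (p : ℤ) + 3 * b + 1) * h1' - (2 * (p : ℤ) + 2 * b) * h2'
  have hbn : (0 : ℤ) ≤ (b : ℤ) := Int.natCast_nonneg b
  have hpn : (0 : ℤ) ≤ (p : ℤ) := Int.natCast_nonneg p
  have hD : (0 : ℤ) ≤ 4 * p - 1 - 3 * b ^ 2 := by linarith
  rcases hD.lt_or_eq with hDpos | hDzero
  · -- contradiction case
    exfalso
    have hden : (0 : ℤ) < (2 * p + 2 * b) * (2 * p + 3 * b + 1) := by positivity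
    have hM : (0 : ℤ) < ((b : ℤ) + 1) * (2 * b + 1) := by positivity
    have hw : (0 : ℤ) < (v : ℤ) - u := by
      by_contra hle
      push_neg at hle
      nlinarith [mul_pos hM hDpos, mul_nonpos_of_nonpos_of_nonneg hle hden.le]
    have hw1 : (1 : ℤ) ≤ (v : ℤ) - u := hw
    have hge : (2 * (p : ℤ) + 2 * b) * (2 * p + 3 * b + 1) ≤
        ((b : ℤ) + 1) * (2 * b + 1) * (4 * p - 1 - 3 * b ^ 2) := by
      calc (2 * (p : ℤ) + 2 * b) * (2 * p + 3 * b + 1)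
          = 1 * ((2 * (p : ℤ) + 2 * b) * (2 * p + 3 * b + 1)) := by ring
        _ ≤ ((v : ℤ) - u) * ((2 * p + 2 * b) * (2 * p + 3 * b + 1)) := by
            exact mul_le_mul_of_nonneg_right hw1 hden.le
        _ = _ := key
    -- but the quadratic is always positive
    nlinarith [sq_nonneg (4 * (p : ℤ) - (4 * b ^ 2 + b + 1)), sq_nonneg (b : ℤ),
      mul_nonneg hbn hbn, mul_nonneg (mul_nonneg hbn hbn) hbn,
      mul_nonneg (mul_nonneg (mul_nonneg hbn hbn) hbn) hbn]
  · have h4 : 4 * p = 3 * b ^ 2 + 1 := by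
      have : (4 : ℤ) * p = 3 * b ^ 2 + 1 := by linarith
      exact_mod_cast this
    set B := b ^ 2
    omega
end

section
/- Let p ≥ 5 be prime and let m, λ, μ be rational integers with λ ≠ μ, m + (p+1)λ + 2(p-1)μ = 0, m² + (p+1)λ² + 2(p-1)μ² = 3pm, 0 < m < 3p - 1, |λ| < m, |μ| < m. Then there is no second triple (m', λ', μ') with the same properties satisfying m + m' = 3p - 1, 1 + λ + λ' = 0 and 1 + μ + μ' = 0. -/
set_option maxHeartbeats 1600000 in
theorem stmt_14 (p : ℕ) (hp : p.Prime) (hp5 : 5 ≤ p) (m lam mu : ℤ)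
    (hne : lam ≠ mu)
    (hlin : m + ((p : ℤ) + 1) * lam + 2 * ((p : ℤ) - 1) * mu = 0)
    (hquad : m ^ 2 + ((p : ℤ) + 1) * lam ^ 2 + 2 * ((p : ℤ) - 1) * mu ^ 2 = 3 * (p : ℤ) * m)
    (hm0 : 0 < m) (hm1 : m < 3 * (p : ℤ) - 1)
    (hlam : |lam| < m) (hmu : |mu| < m) :
    ¬ ∃ m' lam' mu' : ℤ,
      lam' ≠ mu' ∧
      m' + ((p : ℤ) + 1) * lam' + 2 * ((p : ℤ) - 1) * mu' = 0 ∧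
      m' ^ 2 + ((p : ℤ) + 1) * lam' ^ 2 + 2 * ((p : ℤ) - 1) * mu' ^ 2 = 3 * (p : ℤ) * m' ∧
      0 < m' ∧ m' < 3 * (p : ℤ) - 1 ∧ |lam'| < m' ∧ |mu'| < m' ∧
      m + m' = 3 * (p : ℤ) - 1 ∧ 1 + lam + lam' = 0 ∧ 1 + mu + mu' = 0 := by
  intro _
  set P : ℤ := (p : ℤ) with hPdef
  have hp5' : (5 : ℤ) ≤ P := by rw [hPdef]; exact_mod_cast hp5
  have hPpos : (0 : ℤ) < P := by linarith
  have hPne : P ≠ 0 := ne_of_gt hPpos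
  have hPprime : Prime P := Nat.prime_iff_prime_int.mp hp
  -- Step 1: P ∣ (lam - mu)
  have hdvd1 : P ∣ 2 * (lam - mu) ^ 2 :=
    ⟨-((P + 3) * lam ^ 2 + 4 * P * lam * mu + (4 * P - 6) * mu ^ 2 + 3 * (P + 1) * lam
        + 6 * (P - 1) * mu), by
      linear_combination hquad - (m - (P + 1) * lam - 2 * (P - 1) * mu - 3 * P) * hlin⟩
  have hdvd : P ∣ (lam - mu) := by
    rcases hPprime.dvd_mul.mp hdvd1 with h | h
    · have := Int.le_of_dvd (by norm_num) h
      linarith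
    · exact hPprime.dvd_of_dvd_pow h
  obtain ⟨t, ht⟩ := hdvd
  -- Step 2: P ∣ mu * (mu + 1)
  have hq0 : P * (3 * (3 * P - 1) * mu ^ 2 + (6 * t * P * (P + 1) + 3 * (3 * P - 1)) * mu
      + P * (P + 1) * t * ((P + 2) * t + 3)) = 0 := by
    linear_combination hquad - (m - (P + 1) * lam - 2 * (P - 1) * mu - 3 * P) * hlin
      - ((P + 1) * (P + 2) * (lam + mu + P * t) + 4 * (P ^ 2 - 1) * mu + 3 * P * (P + 1)) * ht
  have hQ : 3 * (3 * P - 1) * mu ^ 2 + (6 * t * P * (P + 1) + 3 * (3 * P - 1)) * mu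
      + P * (P + 1) * t * ((P + 2) * t + 3) = 0 := by
    have := mul_eq_zero.mp hq0
    tauto
  have hdvd3 : P ∣ 3 * (mu * (mu + 1)) :=
    ⟨9 * mu ^ 2 + 6 * t * (P + 1) * mu + 9 * mu + (P + 1) * t * ((P + 2) * t + 3), by
      linear_combination -hQ⟩
  have hdvdmu : P ∣ mu * (mu + 1) := by
    rcases hPprime.dvd_mul.mp hdvd3 with h | h
    · have := Int.le_of_dvd (by norm_num) h
      linarith
    · exact h
  have hone : ∀ x : ℤ, x ≠ 0 → 1 ≤ x ^ 2 := by
    intro x hx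
    have h0 : 0 < x ^ 2 := lt_of_le_of_ne (sq_nonneg x) (Ne.symm (pow_ne_zero 2 hx))
    linarith
  rcases hPprime.dvd_mul.mp hdvdmu with hcase | hcase
  · -- Case 1: mu = P * b
    obtain ⟨b, hb⟩ := hcase
    have hla : lam = P * (b + t) := by linear_combination ht + hb
    set a : ℤ := b + t with hadef
    set c : ℤ := -((P + 1) * a + 2 * (P - 1) * b) with hcdef
    have hm : m = P * c := by
      linear_combination hlin - (P + 1) * hla - 2 * (P - 1) * hb
    clear_value a c
    have hc1 : 1 ≤ c := by
      by_contra h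
      push_neg at h
      have hc0 : c ≤ 0 := by linarith
      have : P * c ≤ 0 := mul_nonpos_of_nonneg_of_nonpos (le_of_lt hPpos) hc0
      rw [hm] at hm0
      linarith
    have hc2 : c ≤ 2 := by
      by_contra h
      push_neg at h
      have h3 : (3 : ℤ) ≤ c := by linarith
      have : P * 3 ≤ P * c := mul_le_mul_of_nonneg_left h3 (le_of_lt hPpos)
      rw [hm] at hm1
      linarith
    have hkey0 : P ^ 2 * (c ^ 2 + (P + 1) * a ^ 2 + 2 * (P - 1) * b ^ 2) = P ^ 2 * (3 * c) := by
      linear_combination hquad + (3 * P - m - P * c) * hm - (P + 1) * (lam + P * a) * hla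
        - 2 * (P - 1) * (mu + P * b) * hb
    have hkey : c ^ 2 + (P + 1) * a ^ 2 + 2 * (P - 1) * b ^ 2 = 3 * c :=
      mul_left_cancel₀ (pow_ne_zero 2 hPne) hkey0
    have hA : 0 ≤ (P + 1) * a ^ 2 := mul_nonneg (by linarith) (sq_nonneg a)
    have hB : 0 ≤ 2 * (P - 1) * b ^ 2 := mul_nonneg (by linarith) (sq_nonneg b)
    have hcc : 3 * c - 2 ≤ c ^ 2 := by interval_cases c <;> norm_num
    have hsum : (P + 1) * a ^ 2 + 2 * (P - 1) * b ^ 2 ≤ 2 := by linarith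
    have ha0 : a = 0 := by
      by_contra h
      have h1 := hone a h
      have : P + 1 ≤ (P + 1) * a ^ 2 := le_mul_of_one_le_right (by linarith) h1
      linarith
    have hb0 : b = 0 := by
      by_contra h
      have h1 := hone b h
      have : 2 * (P - 1) ≤ 2 * (P - 1) * b ^ 2 := le_mul_of_one_le_right (by linarith) h1
      linarith
    rw [ha0, hb0] at hkey
    have : c ^ 2 = 3 * c := by linarith [hkey]
    interval_cases c <;> norm_num at this
  · -- Case 2: mu = P * b - 1
    obtain ⟨b, hb'⟩ := hcase
    have hb : mu = P * b - 1 := by linarith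
    have hla : lam = P * (b + t) - 1 := by linear_combination ht + hb
    set a : ℤ := b + t with hadef
    set K : ℤ := (P + 1) * a + 2 * (P - 1) * b with hKdef
    have hm : m = 3 * P - 1 - P * K := by
      linear_combination hlin - (P + 1) * hla - 2 * (P - 1) * hb
    have hu : P * (a + 2 * b) = K - a + 2 * b := by rw [hKdef]; ring
    clear_value a K
    have hK1 : 1 ≤ K := by
      by_contra h
      push_neg at h
      have hK0 : K ≤ 0 := by linarith
      have : P * K ≤ 0 := mul_nonpos_of_nonneg_of_nonpos (le_of_lt hPpos) hK0
      rw [hm] at hm1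
      linarith
    have hK2 : K ≤ 2 := by
      by_contra h
      push_neg at h
      have h3 : (3 : ℤ) ≤ K := by linarith
      have : P * 3 ≤ P * K := mul_le_mul_of_nonneg_left h3 (le_of_lt hPpos)
      rw [hm] at hm0
      linarith
    -- bounds on a and b
    obtain ⟨hlamm1, hlamm2⟩ := abs_lt.mp hlam
    obtain ⟨hmum1, hmum2⟩ := abs_lt.mp hmu
    rw [hla, hm] at hlamm1 hlamm2
    rw [hb, hm] at hmum1 hmum2
    have ha1 : a ≤ 2 := by
      by_contra h
      push_neg at h
      have h3 : (3 : ℤ) ≤ a := by linarith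
      have : P * 3 ≤ P * a := mul_le_mul_of_nonneg_left h3 (le_of_lt hPpos)
      have hPK : 0 < P * K := mul_pos hPpos (by linarith)
      linarith
    have ha2 : -2 ≤ a := by
      by_contra h
      push_neg at h
      have h3 : a ≤ -3 := by linarith
      have : P * a ≤ P * (-3) := mul_le_mul_of_nonneg_left h3 (le_of_lt hPpos)
      have hPK : P * K ≤ P * 2 := mul_le_mul_of_nonneg_left hK2 (le_of_lt hPpos)
      linarith
    have hb1 : b ≤ 2 := by
      by_contra h
      push_neg at h
      have h3 : (3 : ℤ) ≤ b := by linarith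
      have : P * 3 ≤ P * b := mul_le_mul_of_nonneg_left h3 (le_of_lt hPpos)
      have hPK : 0 < P * K := mul_pos hPpos (by linarith)
      linarith
    have hb2 : -2 ≤ b := by
      by_contra h
      push_neg at h
      have h3 : b ≤ -3 := by linarith
      have : P * b ≤ P * (-3) := mul_le_mul_of_nonneg_left h3 (le_of_lt hPpos)
      have hPK : P * K ≤ P * 2 := mul_le_mul_of_nonneg_left hK2 (le_of_lt hPpos)
      linarith
    -- bound P
    have hP8 : P ≤ 8 := by
      rcases lt_trichotomy (a + 2 * b) 0 with h | h | h
      · have h1 : a + 2 * b ≤ -1 := by linarith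
        have : P * (a + 2 * b) ≤ P * (-1) := mul_le_mul_of_nonneg_left h1 (le_of_lt hPpos)
        linarith
      · rw [h, mul_zero] at hu
        omega
      · have h1 : (1 : ℤ) ≤ a + 2 * b := by linarith
        have : P * 1 ≤ P * (a + 2 * b) := mul_le_mul_of_nonneg_left h1 (le_of_lt hPpos)
        linarith
    have hp8 : p ≤ 8 := by
      have : (p : ℤ) ≤ 8 := by rw [← hPdef]; exact hP8
      exact_mod_cast this
    interval_cases p
    · simp only [hPdef] at hu hlamm1 hlamm2 hmum1 hmum2
      push_cast at hu hlamm1 hlamm2 hmum1 hmum2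
      omega
    · exact absurd hp (by decide)
    · simp only [hPdef] at hu hlamm1 hlamm2 hmum1 hmum2
      push_cast at hu hlamm1 hlamm2 hmum1 hmum2
      omega
    · exact absurd hp (by decide)
end

section
/- Let p be prime and λ, ε, m integers with m = ε(p-1) - 2λ, and suppose there exist real algebraic integers μ, ν with μ + ν = -ε - λ, μν ∈ ℤ, and (p-1)(μ² + ν²) = 3pm - m² - (p+1)λ². Then p - 1 divides 3λ(λ+1). -/
theorem stmt_15 (p : ℕ) (hp : p.Prime) (lam ε m : ℤ)
    (hm : m = ε * ((p : ℤ) - 1) - 2 * lam)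
    (h : ∃ μ ν : ℝ, IsIntegral ℤ μ ∧ IsIntegral ℤ ν ∧
      μ + ν = -(ε : ℝ) - (lam : ℝ) ∧ (∃ k : ℤ, μ * ν = (k : ℝ)) ∧
      ((p : ℝ) - 1) * (μ ^ 2 + ν ^ 2) =
        3 * (p : ℝ) * (m : ℝ) - (m : ℝ) ^ 2 - ((p : ℝ) + 1) * (lam : ℝ) ^ 2) :
    ((p : ℤ) - 1) ∣ 3 * lam * (lam + 1) := by
  obtain ⟨μ, ν, hμ, hν, hsum, ⟨k, hk⟩, heq⟩ := h
  have h2 : μ ^ 2 + ν ^ 2 = ((ε : ℝ) + (lam : ℝ)) ^ 2 - 2 * (k : ℝ) := by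
    linear_combination (μ + ν + (-(ε : ℝ) - (lam : ℝ))) * hsum - 2 * hk
  rw [h2] at heq
  have key : ((p : ℤ) - 1) * ((ε + lam) ^ 2 - 2 * k) =
      3 * (p : ℤ) * m - m ^ 2 - ((p : ℤ) + 1) * lam ^ 2 := by
    exact_mod_cast heq
  rcases hp.eq_two_or_odd' with h2p | hodd
  · subst h2p
    simp
  · obtain ⟨a, ha⟩ := hodd
    have hpz : (p : ℤ) = 2 * (a : ℤ) + 1 := by exact_mod_cast ha
    obtain ⟨t, ht⟩ : Even (ε * (ε + 1)) := Int.even_mul_succ_self ε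
    subst hm
    rw [hpz] at key
    set A : ℤ := (a : ℤ)
    refine ⟨4 * A * ε - 2 * A * t + 2 * ε - t - 3 * lam + ε * lam - lam ^ 2 + k, ?_⟩
    have aux : 2 * (3 * lam * (lam + 1)) =
        2 * (((2 * A + 1 : ℤ) - 1) *
          (4 * A * ε - 2 * A * t + 2 * ε - t - 3 * lam + ε * lam - lam ^ 2 + k)) := by
      linear_combination key - 2 * A * (2 * A + 1) * ht
    rw [hpz]
    exact mul_left_cancel₀ two_ne_zero aux
end

section
/- Let p be prime and λ, ε integers such that m = ε(p-1) - 2λ > 0, and suppose real numbers μ, ν satisfy μ + ν = -ε - λ and (p-1)(μ² + ν²) = 3pm - m² - (p+1)λ². Then ε(p-1)(6p - 2εp + ε) - 6λ(2p - εp + ε) - (3p+9)λ² ≥ 0. -/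
theorem stmt_16 (p : ℕ) (hp : p.Prime) (lam ε m : ℤ)
    (hm : m = ε * ((p : ℤ) - 1) - 2 * lam) (hm0 : 0 < m)
    (μ ν : ℝ)
    (hsum : μ + ν = -(ε : ℝ) - (lam : ℝ))
    (hquad : ((p : ℝ) - 1) * (μ ^ 2 + ν ^ 2) =
      3 * (p : ℝ) * (m : ℝ) - (m : ℝ) ^ 2 - ((p : ℝ) + 1) * (lam : ℝ) ^ 2) :
    ε * ((p : ℤ) - 1) * (6 * (p : ℤ) - 2 * ε * (p : ℤ) + ε) -
      6 * lam * (2 * (p : ℤ) - ε * (p : ℤ) + ε) - (3 * (p : ℤ) + 9) * lam ^ 2 ≥ 0 := by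
  have hmr : (m : ℝ) = (ε : ℝ) * ((p : ℝ) - 1) - 2 * (lam : ℝ) := by
    exact_mod_cast congrArg (Int.cast : ℤ → ℝ) hm
  rw [hmr] at hquad
  have hpge : (1 : ℝ) ≤ (p : ℝ) := by exact_mod_cast hp.one_lt.le
  have heq : (ε : ℝ) * ((p : ℝ) - 1) * (6 * (p : ℝ) - 2 * ε * (p : ℝ) + ε) -
      6 * (lam : ℝ) * (2 * (p : ℝ) - ε * (p : ℝ) + ε) - (3 * (p : ℝ) + 9) * (lam : ℝ) ^ 2
      = ((p : ℝ) - 1) * (μ - ν) ^ 2 := by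
    linear_combination (-2 : ℝ) * hquad + ((p : ℝ) - 1) * (μ + ν - (ε : ℝ) - (lam : ℝ)) * hsum
  have key : ((ε : ℝ) * ((p : ℝ) - 1) * (6 * (p : ℝ) - 2 * ε * (p : ℝ) + ε) -
      6 * (lam : ℝ) * (2 * (p : ℝ) - ε * (p : ℝ) + ε) - (3 * (p : ℝ) + 9) * (lam : ℝ) ^ 2) ≥ 0 := by
    rw [heq]
    exact mul_nonneg (by linarith) (sq_nonneg _)
  have : ((ε * ((p : ℤ) - 1) * (6 * (p : ℤ) - 2 * ε * (p : ℤ) + ε) -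
      6 * lam * (2 * (p : ℤ) - ε * (p : ℤ) + ε) - (3 * (p : ℤ) + 9) * lam ^ 2 : ℤ) : ℝ) ≥ 0 := by
    push_cast
    linarith [key]
  exact_mod_cast this
end
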